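/- arXiv:2407.09024 — 2 statements merged into one kernel-verified Lean document; each statement's English description precedes it below -/
import Mathlib

section
/- Let μ(·|s) and Q be given, and define π*(a|s) ∝ μ(a|s)·exp(Q(s,a)). Let μ_t(a_t|s) = ∫ N(a_t | α_t a, σ_t² I) μ(a|s) da and π*_t(a_t|s) = ∫ N(a_t | α_t a, σ_t² I) π*(a|s) da be their diffused marginals at time t. Then π*_t(a_t|s) ∝ μ_t(a_t|s) · exp(Q_t(s, a_t, t)), where Q_t(s, a_t, t) := log E_{a ∼ μ_t(·|a_t, s, t)}[ exp(Q(s,a)) ] and μ_t(a|a_t,s,t) = μ(a|s) N(a_t|α_t a, σ_t² I)/μ_t(a_t|s) is the posterior. -/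
/-! Both sides equal `Z⁻¹ ∫ μ(a) N(x | α a, σ² I) e^{Q(a)} da`: pulling the normalising
constants `Z` and `μ_t(x)` out of the integrals leaves only the positivity of that integral
to check, so that the logarithm in `Q_t` is undone by `exp`. Positivity holds because
`e^Q ≥ e^{-M}` bounds it below by `e^{-M} μ_t(x) > 0`. -/

open MeasureTheory Real

/-- Isotropic Gaussian density `N(x | m, σ² I)` on `ℝ^d`. -/
noncomputable def gaussDensity (d : ℕ) (σ : ℝ) (m x : EuclideanSpace ℝ (Fin d)) : ℝ :=
  (2 * Real.pi * σ ^ 2) ^ (-(d : ℝ) / 2) * Real.exp (-‖x - m‖ ^ 2 / (2 * σ ^ 2))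

theorem integral_mul_exp_pos {α : Type*} [MeasurableSpace α] {ν : Measure α} {p Q : α → ℝ}
    {M : ℝ} (hp : 0 ≤ p) (hQ : ∀ a, -M ≤ Q a) (hp_pos : 0 < ∫ a, p a ∂ν)
    (hint : Integrable (fun a => p a * exp (Q a)) ν) :
    0 < ∫ a, p a * exp (Q a) ∂ν :=
  calc 0 < exp (-M) * ∫ a, p a ∂ν := by positivity
    _ = ∫ a, exp (-M) * p a ∂ν := (integral_const_mul _ _).symm
    _ ≤ ∫ a, p a * exp (Q a) ∂ν := by
      refine integral_mono_of_nonneg (ae_of_all _ fun a => ?_) hint (ae_of_all _ fun a => ?_)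
      · exact mul_nonneg (exp_pos _).le (hp a)
      · exact (mul_le_mul_of_nonneg_right (exp_le_exp.mpr (hQ a)) (hp a)).trans_eq (mul_comm _ _)

section gaussDensity

variable {d : ℕ} {σ : ℝ}

theorem gaussDensity_nonneg (m x : EuclideanSpace ℝ (Fin d)) : 0 ≤ gaussDensity d σ m x := by
  unfold gaussDensity
  positivity

theorem gaussDensity_le (m x : EuclideanSpace ℝ (Fin d)) :
    gaussDensity d σ m x ≤ (2 * π * σ ^ 2) ^ (-(d : ℝ) / 2) := by
  unfold gaussDensity
  refine mul_le_of_le_one_right (by positivity) (exp_le_one_iff.mpr ?_)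
  exact div_nonpos_of_nonpos_of_nonneg (neg_nonpos.mpr (by positivity)) (by positivity)

theorem continuous_gaussDensity (x : EuclideanSpace ℝ (Fin d)) :
    Continuous fun m => gaussDensity d σ m x := by
  unfold gaussDensity
  fun_prop

theorem MeasureTheory.Integrable.gaussDensity_smul_mul {f : EuclideanSpace ℝ (Fin d) → ℝ}
    (hf : Integrable f) (α : ℝ) (x : EuclideanSpace ℝ (Fin d)) :
    Integrable fun a => gaussDensity d σ (α • a) x * f a := by
  refine hf.bdd_mul (c := (2 * π * σ ^ 2) ^ (-(d : ℝ) / 2)) ?_ (ae_of_all _ fun a => ?_)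
  · exact ((continuous_gaussDensity x).comp (continuous_const_smul α)).aestronglyMeasurable
  · rw [norm_of_nonneg (gaussDensity_nonneg _ _)]
    exact gaussDensity_le _ _

end gaussDensity

theorem diffused_tilted_marginal_is_tilted_diffused_general (d : ℕ)
    (μ Q : EuclideanSpace ℝ (Fin d) → ℝ)
    (hμpos : ∀ a, 0 < μ a) (hμprob : ∫ a, μ a = 1)
    (hQbdd : ∃ M, ∀ a, |Q a| ≤ M)
    (αt σt : ℝ)
    (Z : ℝ) (hZ : Z = ∫ a, μ a * Real.exp (Q a))
    (hZint : Integrable (fun a => μ a * Real.exp (Q a)))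
    (pistar : EuclideanSpace ℝ (Fin d) → ℝ)
    (hpistar : ∀ a, pistar a = μ a * Real.exp (Q a) / Z)
    (μt pit : EuclideanSpace ℝ (Fin d) → ℝ)
    (hμt : ∀ x, μt x = ∫ a, gaussDensity d σt (αt • a) x * μ a)
    (hpit : ∀ x, pit x = ∫ a, gaussDensity d σt (αt • a) x * pistar a)
    (hμtpos : ∀ x, 0 < μt x)
    (post : EuclideanSpace ℝ (Fin d) → EuclideanSpace ℝ (Fin d) → ℝ)
    (hpost : ∀ x a, post x a = μ a * gaussDensity d σt (αt • a) x / μt x)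
    (Qt : EuclideanSpace ℝ (Fin d) → ℝ)
    (hQt : ∀ x, Qt x = Real.log (∫ a, post x a * Real.exp (Q a))) :
    ∃ c : ℝ, 0 < c ∧ ∀ x, pit x = c * (μt x * Real.exp (Qt x)) := by
  obtain ⟨M, hM⟩ := hQbdd
  have hQ_ge : ∀ a, -M ≤ Q a := fun a => (abs_le.mp (hM a)).1
  have hZpos : 0 < Z :=
    hZ ▸ integral_mul_exp_pos (fun a => (hμpos a).le) hQ_ge (by rw [hμprob]; exact one_pos) hZint
  set I := fun x => ∫ a, gaussDensity d σt (αt • a) x * μ a * exp (Q a)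
  have hIpos : ∀ x, 0 < I x := fun x =>
    integral_mul_exp_pos (fun a => mul_nonneg (gaussDensity_nonneg _ _) (hμpos a).le) hQ_ge
      (hμt x ▸ hμtpos x)
      (by simpa only [mul_assoc] using hZint.gaussDensity_smul_mul αt x)
  have hpit_eq : ∀ x, pit x = I x / Z := fun x => by
    rw [hpit, ← integral_div]
    simp only [hpistar, mul_div_assoc, mul_assoc]
  have hexp_Qt : ∀ x, exp (Qt x) = I x / μt x := fun x => by
    rw [hQt, ← exp_log (div_pos (hIpos x) (hμtpos x)), ← integral_div]
    simp only [hpost]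
    congr 3 with a
    ring
  refine ⟨Z⁻¹, inv_pos.mpr hZpos, fun x => ?_⟩
  rw [hpit_eq, hexp_Qt, mul_div_cancel₀ _ (hμtpos x).ne', inv_mul_eq_div]

/-- Lemma 3 of the paper: with `π*(a) ∝ μ(a) e^{Q(a)}` and `μ_t, π*_t` the
Gaussian-diffused marginals of `μ, π*` at time `t`, one has
`π*_t(a_t) ∝ μ_t(a_t) · exp(Q_t(a_t))`, where `Q_t(a_t) = log E_{posterior}[e^{Q(a)}]`
and the posterior is `μ_t(a | a_t) = μ(a) N(a_t | α_t a, σ_t² I) / μ_t(a_t)`. -/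
theorem diffused_tilted_marginal_is_tilted_diffused (d : ℕ)
    (μ Q : EuclideanSpace ℝ (Fin d) → ℝ)
    (hμmeas : Measurable μ) (hμpos : ∀ a, 0 < μ a) (hμprob : ∫ a, μ a = 1)
    (hQmeas : Measurable Q) (hQbdd : ∃ M, ∀ a, |Q a| ≤ M)
    (αt σt : ℝ) (hαt : 0 < αt) (hσt : 0 < σt)
    (Z : ℝ) (hZ : Z = ∫ a, μ a * Real.exp (Q a))
    (hZint : Integrable (fun a => μ a * Real.exp (Q a)))
    (pistar : EuclideanSpace ℝ (Fin d) → ℝ)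
    (hpistar : ∀ a, pistar a = μ a * Real.exp (Q a) / Z)
    (μt pit : EuclideanSpace ℝ (Fin d) → ℝ)
    (hμt : ∀ x, μt x = ∫ a, gaussDensity d σt (αt • a) x * μ a)
    (hpit : ∀ x, pit x = ∫ a, gaussDensity d σt (αt • a) x * pistar a)
    (hμtpos : ∀ x, 0 < μt x)
    (post : EuclideanSpace ℝ (Fin d) → EuclideanSpace ℝ (Fin d) → ℝ)
    (hpost : ∀ x a, post x a = μ a * gaussDensity d σt (αt • a) x / μt x)
    (Qt : EuclideanSpace ℝ (Fin d) → ℝ)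
    (hQt : ∀ x, Qt x = Real.log (∫ a, post x a * Real.exp (Q a))) :
    ∃ c : ℝ, 0 < c ∧ ∀ x, pit x = c * (μt x * Real.exp (Qt x)) :=
  diffused_tilted_marginal_is_tilted_diffused_general d μ Q hμpos hμprob hQbdd αt σt Z hZ hZint
    pistar hpistar μt pit hμt hpit hμtpos post hpost Qt hQt
end

section
/- Denoising score matching identity: for the diffused density μ_t(x) = ∫ N(x|α_t a, σ_t² I) μ(a) da, the minimizer over measurable ε̂ of E_{a∼μ, ε∼N(0,I)}[ ‖ε̂(α_t a + σ_t ε) − ε‖² ] is ε*(x) = −σ_t ∇_x log μ_t(x). -/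
open MeasureTheory Real
open scoped RealInnerProductSpace ENNReal

lemma gauss_pos (d : ℕ) {σ : ℝ} (hσ : σ ≠ 0) (m x : EuclideanSpace ℝ (Fin d)) :
    0 < gaussDensity d σ m x :=
  mul_pos (Real.rpow_pos_of_pos (by positivity) _) (Real.exp_pos _)

lemma gauss_le (d : ℕ) {σ : ℝ} (hσ : σ ≠ 0) (m x : EuclideanSpace ℝ (Fin d)) :
    gaussDensity d σ m x ≤ (2 * Real.pi * σ ^ 2) ^ (-(d : ℝ) / 2) := by
  have h1 : Real.exp (-‖x - m‖ ^ 2 / (2 * σ ^ 2)) ≤ 1 := by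
    rw [Real.exp_le_one_iff]
    exact div_nonpos_of_nonpos_of_nonneg (neg_nonpos.mpr (by positivity)) (by positivity)
  calc gaussDensity d σ m x ≤ (2 * Real.pi * σ ^ 2) ^ (-(d : ℝ) / 2) * 1 :=
        mul_le_mul_of_nonneg_left h1 (Real.rpow_pos_of_pos (by positivity) _).le
    _ = _ := mul_one _

lemma mul_exp_bound {c t : ℝ} (hc : 0 < c) (ht : 0 ≤ t) : t * Real.exp (-t ^ 2 / c) ≤ 1 + c := by
  rcases le_or_gt t 1 with h | h
  · have h1 : Real.exp (-t ^ 2 / c) ≤ 1 := by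
      rw [Real.exp_le_one_iff]
      exact div_nonpos_of_nonpos_of_nonneg (neg_nonpos.mpr (by positivity)) hc.le
    nlinarith
  · have ht0 : 0 < t := lt_trans one_pos h
    have h2' : t ^ 2 / c ≤ Real.exp (t ^ 2 / c) := by
      linarith [Real.add_one_le_exp (t ^ 2 / c)]
    have h3 : Real.exp (-t ^ 2 / c) ≤ c / t ^ 2 := by
      rw [neg_div, Real.exp_neg]
      rw [inv_le_comm₀ (Real.exp_pos _) (by positivity)]
      calc (c / t ^ 2)⁻¹ = t ^ 2 / c := by field_simp
        _ ≤ Real.exp (t ^ 2 / c) := h2'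
    calc t * Real.exp (-t ^ 2 / c) ≤ t * (c / t ^ 2) :=
          mul_le_mul_of_nonneg_left h3 ht
      _ = c / t := by field_simp
      _ ≤ c := by rw [div_le_iff₀ ht0]; nlinarith
      _ ≤ 1 + c := by linarith

lemma norm_gauss_le (d : ℕ) {σ : ℝ} (hσ : 0 < σ) (m x : EuclideanSpace ℝ (Fin d)) :
    ‖x - m‖ * gaussDensity d σ m x ≤
      (2 * Real.pi * σ ^ 2) ^ (-(d : ℝ) / 2) * (1 + 2 * σ ^ 2) := by
  have hc : (0:ℝ) < 2 * σ ^ 2 := by positivity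
  have := mul_exp_bound hc (norm_nonneg (x - m))
  have hpref : (0:ℝ) < (2 * Real.pi * σ ^ 2) ^ (-(d : ℝ) / 2) :=
    Real.rpow_pos_of_pos (by positivity) _
  calc ‖x - m‖ * gaussDensity d σ m x
      = (2 * Real.pi * σ ^ 2) ^ (-(d : ℝ) / 2) * (‖x - m‖ * Real.exp (-‖x - m‖ ^ 2 / (2 * σ ^ 2))) := by
        unfold gaussDensity; ring
    _ ≤ (2 * Real.pi * σ ^ 2) ^ (-(d : ℝ) / 2) * (1 + 2 * σ ^ 2) :=
        mul_le_mul_of_nonneg_left this hpref.le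

lemma gauss_scale (d : ℕ) {σ : ℝ} (hσ : 0 < σ) (m x : EuclideanSpace ℝ (Fin d)) :
    gaussDensity d 1 0 (σ⁻¹ • (x - m)) = σ ^ d * gaussDensity d σ m x := by
  have hσd : (σ:ℝ) ^ d ≠ 0 := by positivity
  unfold gaussDensity
  have h1 : ‖σ⁻¹ • (x - m) - 0‖ ^ 2 = σ⁻¹ ^ 2 * ‖x - m‖ ^ 2 := by
    rw [sub_zero, norm_smul, Real.norm_eq_abs, abs_of_pos (by positivity), mul_pow]
  have h2 : (2 * Real.pi * σ ^ 2 : ℝ) ^ (-(d : ℝ) / 2)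
      = (2 * Real.pi * 1 ^ 2) ^ (-(d : ℝ) / 2) * (σ ^ d)⁻¹ := by
    rw [one_pow, mul_one, Real.mul_rpow (by positivity) (by positivity)]
    congr 1
    rw [← Real.rpow_natCast σ 2, ← Real.rpow_mul hσ.le]
    rw [show ((2:ℕ):ℝ) * (-(d : ℝ) / 2) = -(d:ℝ) by push_cast; ring]
    rw [Real.rpow_neg hσ.le, Real.rpow_natCast]
  have h3 : -(σ⁻¹ ^ 2 * ‖x - m‖ ^ 2) / (2 * 1 ^ 2) = -‖x - m‖ ^ 2 / (2 * σ ^ 2) := by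
    rw [div_eq_div_iff (by positivity) (by positivity)]
    field_simp
  rw [h1, h2, h3]
  field_simp

lemma hasGradientAt_gauss (d : ℕ) (σ : ℝ) (m x : EuclideanSpace ℝ (Fin d)) :
    HasGradientAt (fun y => gaussDensity d σ m y)
      ((-(σ ^ 2)⁻¹ * gaussDensity d σ m x) • (x - m)) x := by
  set c : ℝ := -(2 * σ ^ 2)⁻¹ with hc
  set P : ℝ := (2 * Real.pi * σ ^ 2) ^ (-(d : ℝ) / 2) with hP
  have harg : ∀ y : EuclideanSpace ℝ (Fin d),
      -‖y - m‖ ^ 2 / (2 * σ ^ 2) = c * ‖y - m‖ ^ 2 := fun y => by rw [hc]; ring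
  have hQ : HasFDerivAt (fun y : EuclideanSpace ℝ (Fin d) => ‖y - m‖ ^ 2)
      (2 • (innerSL ℝ (x - m)).comp (ContinuousLinearMap.id ℝ _)) x :=
    ((hasFDerivAt_id x).sub_const m).norm_sq
  have H := ((Real.hasDerivAt_exp (c * ‖x - m‖ ^ 2)).comp_hasFDerivAt x
      (hQ.const_mul c)).const_mul P
  have hfun : (fun y => gaussDensity d σ m y)
      = fun y : EuclideanSpace ℝ (Fin d) => P * Real.exp (c * ‖y - m‖ ^ 2) := by
    funext y; rw [gaussDensity, harg]
  have heq : (InnerProductSpace.toDual ℝ (EuclideanSpace ℝ (Fin d)))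
        ((-(σ ^ 2)⁻¹ * gaussDensity d σ m x) • (x - m))
      = P • (Real.exp (c * ‖x - m‖ ^ 2) •
          (c • (2 • (innerSL ℝ (x - m)).comp (ContinuousLinearMap.id ℝ _)))) := by
    ext v
    simp only [InnerProductSpace.toDual_apply_apply, real_inner_smul_left,
      ContinuousLinearMap.coe_smul', Pi.smul_apply, ContinuousLinearMap.coe_comp',
      Function.comp_apply, ContinuousLinearMap.coe_id', id_eq, innerSL_apply_apply, smul_eq_mul,
      gaussDensity, harg]
    ring
  rw [hasGradientAt_iff_hasFDerivAt, hfun, heq]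
  simpa [Function.comp] using H

lemma prod_smul_right_meas {α β : Type*} [MeasurableSpace α] [MeasurableSpace β]
    (μ : Measure α) (ν : Measure β) [SFinite μ] [SFinite ν] (c : ℝ≥0∞) :
    μ.prod (c • ν) = c • (μ.prod ν) := by
  ext s hs
  rw [Measure.prod_apply hs, Measure.smul_apply, smul_eq_mul, Measure.prod_apply hs,
    ← lintegral_const_mul _ (measurable_measure_prodMk_left hs)]
  simp [Measure.smul_apply, smul_eq_mul]

set_option maxHeartbeats 1000000 in
/-- denoising score matching: for the diffused density
`μ_t(x) = ∫ N(x | α_t a, σ_t² I) μ(a) da`, the minimizer over measurable `ε̂` of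
`E_{a∼μ, ε∼N(0,I)}[ ‖ε̂(α_t a + σ_t ε) − ε‖² ]` is `ε*(x) = −σ_t ∇_x log μ_t(x)`. -/
theorem denoising_score_matching_minimizer (d : ℕ)
    (μ : EuclideanSpace ℝ (Fin d) → ℝ)
    (hμpos : ∀ a, 0 < μ a) (hμsmooth : ContDiff ℝ (⊤ : ℕ∞) μ) (hμprob : ∫ a, μ a = 1)
    (αt σt : ℝ) (hσt : 0 < σt)
    (μt : EuclideanSpace ℝ (Fin d) → ℝ)
    (hμt : ∀ x, μt x = ∫ a, gaussDensity d σt (αt • a) x * μ a)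
    (hμtpos : ∀ x, 0 < μt x)
    (L : (EuclideanSpace ℝ (Fin d) → EuclideanSpace ℝ (Fin d)) → ℝ)
    (hL : ∀ ehat, L ehat =
      ∫ a, ∫ e, ‖ehat (αt • a + σt • e) - e‖ ^ 2 * (μ a * gaussDensity d 1 0 e))
    (estar : EuclideanSpace ℝ (Fin d) → EuclideanSpace ℝ (Fin d))
    (hestar : ∀ x, estar x = -σt • gradient (fun y => Real.log (μt y)) x)
    (hestarint : Integrable (fun p : EuclideanSpace ℝ (Fin d) × EuclideanSpace ℝ (Fin d) =>
      ‖estar (αt • p.1 + σt • p.2) - p.2‖ ^ 2 * (μ p.1 * gaussDensity d 1 0 p.2))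
      (volume.prod volume)) :
    ∀ ehat : EuclideanSpace ℝ (Fin d) → EuclideanSpace ℝ (Fin d), Measurable ehat →
      Integrable (fun p : EuclideanSpace ℝ (Fin d) × EuclideanSpace ℝ (Fin d) =>
        ‖ehat (αt • p.1 + σt • p.2) - p.2‖ ^ 2 * (μ p.1 * gaussDensity d 1 0 p.2))
        (volume.prod volume) →
      L estar ≤ L ehat := by
  intro ehat hmeas hint
  have hσ' : (σt:ℝ) ≠ 0 := hσt.ne'
  have hμcont : Continuous μ := hμsmooth.continuous
  have hμint : Integrable μ := by
    by_contra h
    rw [integral_undef h] at hμprob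
    exact one_ne_zero hμprob.symm
  set Cg : ℝ := (2 * Real.pi * σt ^ 2) ^ (-(d : ℝ) / 2) with hCg
  set Cn : ℝ := Cg * (1 + 2 * σt ^ 2) with hCn
  have hGcont : ∀ x, Continuous fun a : EuclideanSpace ℝ (Fin d) =>
      gaussDensity d σt (αt • a) x := by
    intro x
    unfold gaussDensity
    fun_prop
  have hGμint : ∀ x, Integrable (fun a => gaussDensity d σt (αt • a) x * μ a) := by
    intro x
    refine (hμint.const_mul Cg).mono' ((hGcont x).mul hμcont).aestronglyMeasurable
      (Filter.Eventually.of_forall fun a => ?_)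
    have h1 := (gauss_pos d hσ' (αt • a) x).le
    rw [Real.norm_eq_abs, abs_of_nonneg (mul_nonneg h1 (hμpos a).le)]
    exact mul_le_mul_of_nonneg_right (gauss_le d hσ' _ _) (hμpos a).le
  set J : EuclideanSpace ℝ (Fin d) → EuclideanSpace ℝ (Fin d) → EuclideanSpace ℝ (Fin d) :=
    fun x a => (gaussDensity d σt (αt • a) x * μ a) • (x - αt • a) with hJ
  have hJcont : ∀ x, Continuous (J x) := by
    intro x
    exact ((hGcont x).mul hμcont).smul (continuous_const.sub (continuous_id.const_smul αt))
  have hJbound : ∀ x a, ‖J x a‖ ≤ Cn * μ a := by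
    intro x a
    have h1 := (gauss_pos d hσ' (αt • a) x).le
    rw [hJ, norm_smul, Real.norm_eq_abs, abs_of_nonneg (mul_nonneg h1 (hμpos a).le)]
    calc gaussDensity d σt (αt • a) x * μ a * ‖x - αt • a‖
        = (‖x - αt • a‖ * gaussDensity d σt (αt • a) x) * μ a := by ring
      _ ≤ Cn * μ a := mul_le_mul_of_nonneg_right (norm_gauss_le d hσt _ _) (hμpos a).le
  have hJint : ∀ x, Integrable (J x) := by
    intro x
    exact (hμint.const_mul Cn).mono' (hJcont x).aestronglyMeasurable
      (Filter.Eventually.of_forall fun a => hJbound x a)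
  set Ix : EuclideanSpace ℝ (Fin d) → EuclideanSpace ℝ (Fin d) := fun x => ∫ a, J x a with hIx
  -- Tweedie: gradient of μt
  have hTweedie : ∀ x, HasGradientAt μt ((-(σt ^ 2)⁻¹) • Ix x) x := by
    intro x₀
    have hderiv : ∀ a, ∀ y, HasFDerivAt (fun y => gaussDensity d σt (αt • a) y * μ a)
        ((InnerProductSpace.toDual ℝ (EuclideanSpace ℝ (Fin d)))
          ((-(σt ^ 2)⁻¹) • J y a)) y := by
      intro a y
      have h := ((hasGradientAt_gauss d σt (αt • a) y).hasFDerivAt).mul_const (μ a)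
      refine h.congr_fderiv ?_
      rw [← _root_.map_smul]
      congr 1
      simp only [hJ, smul_smul]
      congr 1
      ring
    have key := hasFDerivAt_integral_of_dominated_of_fderiv_le (𝕜 := ℝ)
      (F := fun y a => gaussDensity d σt (αt • a) y * μ a)
      (F' := fun y a => (InnerProductSpace.toDual ℝ (EuclideanSpace ℝ (Fin d)))
        ((-(σt ^ 2)⁻¹) • J y a))
      (bound := fun a => (σt ^ 2)⁻¹ * Cn * μ a) (x₀ := x₀) (Metric.ball_mem_nhds x₀ one_pos)
      (Filter.Eventually.of_forall fun y =>
        ((hGcont y).mul hμcont).aestronglyMeasurable)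
      (hGμint x₀)
      (by
        have hc : Continuous fun a => (InnerProductSpace.toDual ℝ (EuclideanSpace ℝ (Fin d)))
            ((-(σt ^ 2)⁻¹) • J x₀ a) :=
          (InnerProductSpace.toDual ℝ (EuclideanSpace ℝ (Fin d))).continuous.comp
            ((hJcont x₀).const_smul (-(σt ^ 2)⁻¹) : Continuous fun a => (-(σt ^ 2)⁻¹) • J x₀ a)
        exact hc.aestronglyMeasurable)
      (Filter.Eventually.of_forall fun a y _ => by
        rw [LinearIsometryEquiv.norm_map, norm_smul, Real.norm_eq_abs, abs_neg, abs_inv,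
          abs_of_nonneg (by positivity)]
        calc (σt ^ 2)⁻¹ * ‖J y a‖ ≤ (σt ^ 2)⁻¹ * (Cn * μ a) :=
              mul_le_mul_of_nonneg_left (hJbound y a) (by positivity)
          _ = (σt ^ 2)⁻¹ * Cn * μ a := by ring)
      (hμint.const_mul _)
      (Filter.Eventually.of_forall fun a y _ => hderiv a y)
    have hμteq : μt = fun y => ∫ a, gaussDensity d σt (αt • a) y * μ a := funext hμt
    rw [hasGradientAt_iff_hasFDerivAt, hμteq]
    refine key.congr_fderiv ?_
    rw [show (∫ a, (InnerProductSpace.toDual ℝ (EuclideanSpace ℝ (Fin d)))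
        ((-(σt ^ 2)⁻¹) • J x₀ a)) =
        (InnerProductSpace.toDual ℝ (EuclideanSpace ℝ (Fin d)))
          (∫ a, (-(σt ^ 2)⁻¹) • J x₀ a) from
      ((InnerProductSpace.toDual ℝ (EuclideanSpace ℝ (Fin d))).toLinearIsometry.integral_comp_comm
        (fun a => (-(σt ^ 2)⁻¹) • J x₀ a))]
    rw [integral_smul]
  -- key identity
  have hkey : ∀ x, μt x • estar x = σt⁻¹ • Ix x := by
    intro x
    have hlog : HasGradientAt (fun y => Real.log (μt y))
        ((μt x)⁻¹ • ((-(σt ^ 2)⁻¹) • Ix x)) x := by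
      rw [hasGradientAt_iff_hasFDerivAt]
      have h := (Real.hasDerivAt_log (hμtpos x).ne').comp_hasFDerivAt x
        (hTweedie x).hasFDerivAt
      rw [_root_.map_smul]
      exact h
    rw [hestar x, hlog.gradient]
    match_scalars
    field_simp
    exact div_self (hμtpos x).ne'
  -- measurability of estar
  have hgm : Measurable fun x => gradient (fun y => Real.log (μt y)) x := by
    exact (InnerProductSpace.toDual ℝ
      (EuclideanSpace ℝ (Fin d))).symm.continuous.measurable.comp
      (measurable_fderiv ℝ (fun y => Real.log (μt y)))
  have hestarm : Measurable estar := by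
    have he : estar = fun x => -σt • gradient (fun y => Real.log (μt y)) x := funext hestar
    rw [he]
    exact hgm.const_smul (-σt)
    -- abbreviations
  set W1 : EuclideanSpace ℝ (Fin d) × EuclideanSpace ℝ (Fin d) → ℝ :=
    fun p => ‖ehat (αt • p.1 + σt • p.2) - p.2‖ ^ 2 * (μ p.1 * gaussDensity d 1 0 p.2) with hW1
  set W2 : EuclideanSpace ℝ (Fin d) × EuclideanSpace ℝ (Fin d) → ℝ :=
    fun p => ‖estar (αt • p.1 + σt • p.2) - p.2‖ ^ 2 * (μ p.1 * gaussDensity d 1 0 p.2) with hW2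
  set D : EuclideanSpace ℝ (Fin d) × EuclideanSpace ℝ (Fin d) → ℝ :=
    fun p => ‖ehat (αt • p.1 + σt • p.2) - estar (αt • p.1 + σt • p.2)‖ ^ 2 *
      (μ p.1 * gaussDensity d 1 0 p.2) with hD
  set Cr : EuclideanSpace ℝ (Fin d) × EuclideanSpace ℝ (Fin d) → ℝ :=
    fun p => ⟪ehat (αt • p.1 + σt • p.2) - estar (αt • p.1 + σt • p.2),
      estar (αt • p.1 + σt • p.2) - p.2⟫ * (μ p.1 * gaussDensity d 1 0 p.2) with hCr
  have hw_nonneg : ∀ p : EuclideanSpace ℝ (Fin d) × EuclideanSpace ℝ (Fin d),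
      0 ≤ μ p.1 * gaussDensity d 1 0 p.2 :=
    fun p => mul_nonneg (hμpos _).le (gauss_pos d one_ne_zero _ _).le
  have hLehat : L ehat = ∫ p, W1 p ∂(volume.prod volume) := by
    rw [hL ehat]
    exact integral_integral
      (f := fun a e => ‖ehat (αt • a + σt • e) - e‖ ^ 2 * (μ a * gaussDensity d 1 0 e)) hint
  have hLestar : L estar = ∫ p, W2 p ∂(volume.prod volume) := by
    rw [hL estar]
    exact integral_integral
      (f := fun a e => ‖estar (αt • a + σt • e) - e‖ ^ 2 * (μ a * gaussDensity d 1 0 e)) hestarint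
  have hexpand : ∀ b c e : EuclideanSpace ℝ (Fin d),
      ‖b - e‖ ^ 2 = ‖c - e‖ ^ 2 + (‖b - c‖ ^ 2 + 2 * ⟪b - c, c - e⟫) := by
    intro b c e
    have h := norm_add_sq_real (b - c) (c - e)
    have h2 : b - c + (c - e) = b - e := by abel
    rw [h2] at h
    linarith
  have hpt : ∀ p : EuclideanSpace ℝ (Fin d) × EuclideanSpace ℝ (Fin d),
      W1 p = W2 p + (D p + 2 * Cr p) := by
    intro p
    simp only [hW1, hW2, hD, hCr]
    have := hexpand (ehat (αt • p.1 + σt • p.2)) (estar (αt • p.1 + σt • p.2)) p.2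
    linear_combination this * (μ p.1 * gaussDensity d 1 0 p.2)
  have hXmeas : Measurable fun p : EuclideanSpace ℝ (Fin d) × EuclideanSpace ℝ (Fin d) =>
      αt • p.1 + σt • p.2 :=
    (measurable_fst.const_smul αt).add (measurable_snd.const_smul σt)
  have hg1cont : Continuous fun e : EuclideanSpace ℝ (Fin d) => gaussDensity d 1 0 e := by
    unfold gaussDensity
    fun_prop
  have hwcont : Continuous fun p : EuclideanSpace ℝ (Fin d) × EuclideanSpace ℝ (Fin d) =>
      μ p.1 * gaussDensity d 1 0 p.2 :=
    (hμcont.comp continuous_fst).mul (hg1cont.comp continuous_snd)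
  have hDmeas : AEStronglyMeasurable D (volume.prod volume) := by
    apply Measurable.aestronglyMeasurable
    exact (((hmeas.comp hXmeas).sub (hestarm.comp hXmeas)).norm.pow_const 2).mul
      hwcont.measurable
  have hDint : Integrable D (volume.prod volume) := by
    refine ((hint.const_mul 2).add (hestarint.const_mul 2)).mono' hDmeas
      (Filter.Eventually.of_forall fun p => ?_)
    simp only [Pi.add_apply]
    have hw := hw_nonneg p
    have hD0 : 0 ≤ D p := by
      simp only [hD]
      exact mul_nonneg (by positivity) hw
    rw [Real.norm_eq_abs, abs_of_nonneg hD0]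
    simp only [hW1, hW2, hD]
    set b := ehat (αt • p.1 + σt • p.2)
    set c := estar (αt • p.1 + σt • p.2)
    have tri : ‖b - c‖ ≤ ‖b - p.2‖ + ‖c - p.2‖ := by
      have h := norm_sub_le_norm_sub_add_norm_sub b p.2 c
      rwa [norm_sub_rev p.2 c] at h
    have h2 : ‖b - c‖ ^ 2 ≤ 2 * ‖b - p.2‖ ^ 2 + 2 * ‖c - p.2‖ ^ 2 := by
      nlinarith [sq_nonneg (‖b - p.2‖ - ‖c - p.2‖), norm_nonneg (b - c),
        norm_nonneg (b - p.2), norm_nonneg (c - p.2)]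
    nlinarith [mul_le_mul_of_nonneg_right h2 hw]
  have hCrint : Integrable Cr (volume.prod volume) := by
    have hCreq : Cr = fun p => (W1 p - W2 p - D p) / 2 := funext fun p => by
      have := hpt p; linarith
    rw [hCreq]
    exact ((hint.sub hestarint).sub hDint).div_const 2
  -- change of variables
  set Ψ : EuclideanSpace ℝ (Fin d) × EuclideanSpace ℝ (Fin d) → ℝ :=
    fun q => ⟪ehat q.2 - estar q.2, estar q.2 - σt⁻¹ • (q.2 - αt • q.1)⟫ *
      (gaussDensity d σt (αt • q.1) q.2 * μ q.1) with hΨ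
  have he_inv : ∀ p : EuclideanSpace ℝ (Fin d) × EuclideanSpace ℝ (Fin d),
      σt⁻¹ • (αt • p.1 + σt • p.2 - αt • p.1) = p.2 := by
    intro p; rw [add_sub_cancel_left, smul_smul, inv_mul_cancel₀ hσ', one_smul]
  have hCrΨ : ∀ p : EuclideanSpace ℝ (Fin d) × EuclideanSpace ℝ (Fin d),
      Cr p = σt ^ d * Ψ (p.1, αt • p.1 + σt • p.2) := by
    intro p
    have hg : gaussDensity d 1 0 p.2
        = σt ^ d * gaussDensity d σt (αt • p.1) (αt • p.1 + σt • p.2) := by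
      rw [← gauss_scale d hσt, he_inv p]
    simp only [hCr, hΨ]
    rw [hg, he_inv p]
    ring
  have hTcont : Continuous fun p : EuclideanSpace ℝ (Fin d) × EuclideanSpace ℝ (Fin d) =>
      ((p.1, αt • p.1 + σt • p.2) : EuclideanSpace ℝ (Fin d) × EuclideanSpace ℝ (Fin d)) := by
    fun_prop
  have hTicont : Continuous fun q : EuclideanSpace ℝ (Fin d) × EuclideanSpace ℝ (Fin d) =>
      ((q.1, σt⁻¹ • (q.2 - αt • q.1)) : EuclideanSpace ℝ (Fin d) × EuclideanSpace ℝ (Fin d)) := by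
    fun_prop
  let Th : (EuclideanSpace ℝ (Fin d) × EuclideanSpace ℝ (Fin d)) ≃ₜ
      (EuclideanSpace ℝ (Fin d) × EuclideanSpace ℝ (Fin d)) :=
    { toFun := fun p => (p.1, αt • p.1 + σt • p.2)
      invFun := fun q => (q.1, σt⁻¹ • (q.2 - αt • q.1))
      left_inv := fun p => by
        show (p.1, σt⁻¹ • (αt • p.1 + σt • p.2 - αt • p.1)) = p
        rw [he_inv p]
      right_inv := fun q => by
        have h2 : αt • q.1 + σt • (σt⁻¹ • (q.2 - αt • q.1)) = q.2 := by
          rw [smul_smul, mul_inv_cancel₀ hσ', one_smul]; abel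
        simp [h2]
      continuous_toFun := hTcont
      continuous_invFun := hTicont }
  let T := Th.toMeasurableEquiv
  set cE : ℝ≥0∞ := ENNReal.ofReal ((σt ^ d)⁻¹) with hcE
  have hσd : (0:ℝ) < (σt ^ d)⁻¹ := by positivity
  have hmapscale : Measure.map (fun e : EuclideanSpace ℝ (Fin d) => σt • e) volume
      = cE • volume := by
    rw [Measure.map_addHaar_smul (μ := (volume : Measure (EuclideanSpace ℝ (Fin d)))) hσ']
    congr 1
    rw [hcE, finrank_euclideanSpace, Fintype.card_fin, abs_of_pos hσd]
  have hshift : ∀ a : EuclideanSpace ℝ (Fin d),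
      Measure.map (fun e : EuclideanSpace ℝ (Fin d) => αt • a + σt • e) volume
      = cE • volume := by
    intro a
    have hcomp : (fun e : EuclideanSpace ℝ (Fin d) => αt • a + σt • e)
        = ((fun y : EuclideanSpace ℝ (Fin d) => αt • a + y) ∘
            (fun e : EuclideanSpace ℝ (Fin d) => σt • e)) := rfl
    rw [hcomp, ← Measure.map_map (measurable_const_add (αt • a)) (measurable_const_smul σt),
      hmapscale, Measure.map_smul, map_add_left_eq_self]
  have hskew : MeasurePreserving
      (fun p : EuclideanSpace ℝ (Fin d) × EuclideanSpace ℝ (Fin d) =>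
        ((p.1, αt • p.1 + σt • p.2) : EuclideanSpace ℝ (Fin d) × EuclideanSpace ℝ (Fin d)))
      (volume.prod volume) (volume.prod (cE • volume)) :=
    (MeasurePreserving.id volume).skew_product
      (g := fun a e => αt • a + σt • e) hXmeas (ae_of_all _ hshift)
  have hTpres : MeasurePreserving T (volume.prod volume) (cE • (volume.prod volume)) := by
    rw [← prod_smul_right_meas]
    exact hskew
  have hcE0 : cE ≠ 0 := (ENNReal.ofReal_pos.mpr hσd).ne'
  have hΨTint : Integrable (fun p => Ψ (T p)) (volume.prod volume) := by
    have heqf : (fun p => Ψ (T p)) = fun p => (σt ^ d)⁻¹ * Cr p := by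
      funext p
      have hTp : T p = (p.1, αt • p.1 + σt • p.2) := rfl
      rw [hTp, hCrΨ p, ← mul_assoc, inv_mul_cancel₀ (by positivity), one_mul]
    rw [heqf]
    exact hCrint.const_mul _
  have hΨint : Integrable Ψ (volume.prod volume) := by
    have h1 : Integrable Ψ ((volume.prod volume).map T) :=
      (integrable_map_equiv T Ψ).mpr hΨTint
    rw [hTpres.map_eq] at h1
    exact (integrable_smul_measure hcE0 ENNReal.ofReal_ne_top).mp h1
  have hintCr : ∫ p, Cr p ∂(volume.prod volume) = ∫ q, Ψ q ∂(volume.prod volume) := by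
    calc ∫ p, Cr p ∂(volume.prod volume)
        = ∫ p, σt ^ d * Ψ (T p) ∂(volume.prod volume) := by
          congr 1; funext p; exact hCrΨ p
      _ = σt ^ d * ∫ p, Ψ (T p) ∂(volume.prod volume) := integral_const_mul _ _
      _ = σt ^ d * ∫ q, Ψ q ∂((volume.prod volume).map T) := by
          rw [integral_map_equiv]
      _ = σt ^ d * ((σt ^ d)⁻¹ * ∫ q, Ψ q ∂(volume.prod volume)) := by
          rw [hTpres.map_eq, integral_smul_measure, hcE]
          simp [ENNReal.toReal_ofReal hσd.le, smul_eq_mul]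
      _ = ∫ q, Ψ q ∂(volume.prod volume) := by
          rw [← mul_assoc, mul_inv_cancel₀ (by positivity), one_mul]
  have hinner_zero : ∀ x : EuclideanSpace ℝ (Fin d), (∫ a, Ψ (a, x)) = 0 := by
    intro x
    have hv1 : Integrable (fun a => (gaussDensity d σt (αt • a) x * μ a) • estar x) :=
      (hGμint x).smul_const (estar x)
    have hveq : (fun a : EuclideanSpace ℝ (Fin d) =>
        (gaussDensity d σt (αt • a) x * μ a) • (σt⁻¹ • (x - αt • a)))
        = fun a => σt⁻¹ • J x a := by
      funext a; rw [hJ]; exact smul_comm _ _ _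
    have hv2 : Integrable (fun a => (gaussDensity d σt (αt • a) x * μ a) •
        (σt⁻¹ • (x - αt • a))) := by
      rw [hveq]
      exact Integrable.smul σt⁻¹ (hJint x)
    have hsub : (fun a => (gaussDensity d σt (αt • a) x * μ a) •
          (estar x - σt⁻¹ • (x - αt • a)))
        = fun a => (gaussDensity d σt (αt • a) x * μ a) • estar x
            - (gaussDensity d σt (αt • a) x * μ a) • (σt⁻¹ • (x - αt • a)) :=
      funext fun a => smul_sub _ _ _
    have hv : Integrable (fun a => (gaussDensity d σt (αt • a) x * μ a) •
        (estar x - σt⁻¹ • (x - αt • a))) := by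
      rw [hsub]
      exact hv1.sub hv2
    have h1 : (fun a : EuclideanSpace ℝ (Fin d) => Ψ (a, x)) = fun a =>
        (innerSL ℝ (ehat x - estar x))
          ((gaussDensity d σt (αt • a) x * μ a) • (estar x - σt⁻¹ • (x - αt • a))) := by
      funext a
      simp only [hΨ, innerSL_apply_apply]
      rw [real_inner_smul_right]
      ring
    rw [h1, ContinuousLinearMap.integral_comp_comm _ hv]
    have h2 : (∫ a, (gaussDensity d σt (αt • a) x * μ a) •
        (estar x - σt⁻¹ • (x - αt • a))) = 0 := by
      rw [hsub, integral_sub hv1 hv2, integral_smul_const, hveq, integral_smul]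
      have : (∫ a, J x a) = Ix x := rfl
      rw [this, ← hμt x, hkey x, sub_self]
    rw [h2, map_zero]
  have hΨzero : ∫ q, Ψ q ∂(volume.prod volume) = 0 := by
    rw [integral_prod_symm Ψ hΨint]
    simp [hinner_zero]
  have hfinal : ∫ p, W1 p ∂(volume.prod volume)
      = ∫ p, W2 p ∂(volume.prod volume)
        + ((∫ p, D p ∂(volume.prod volume)) + 2 * ∫ p, Cr p ∂(volume.prod volume)) := by
    calc ∫ p, W1 p ∂(volume.prod volume)
        = ∫ p, (W2 p + (D p + 2 * Cr p)) ∂(volume.prod volume) := by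
          congr 1; exact funext hpt
      _ = ∫ p, W2 p ∂(volume.prod volume) + ∫ p, (D p + 2 * Cr p) ∂(volume.prod volume) :=
          integral_add hestarint (hDint.add (hCrint.const_mul 2))
      _ = _ := by
          rw [integral_add hDint (hCrint.const_mul 2), integral_const_mul]
  have hDnn : 0 ≤ ∫ p, D p ∂(volume.prod volume) := by
    refine integral_nonneg fun p => ?_
    simp only [hD]
    exact mul_nonneg (by positivity) (hw_nonneg p)
  rw [hLehat, hLestar, hfinal, hintCr, hΨzero]
  linarith
end
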